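/- For every t ∈ [0,1], the 2×2 operator matrix V_t := [[√(1−t)·α₀, −√t·1], [γ₀ + √t·α₀*α₀, √(1−t)·α₀*]] is a unitary operator on ℓ²(ℕ×ℤ) ⊕ ℓ²(ℕ×ℤ); the map t ↦ V_t on [0,1] is continuous in operator norm; and V₀ = [[α₀, 0], [γ₀, α₀*]]. -/

import Mathlib

/-- `ℓ²(ℕ×ℤ)`: the Hilbert space of square-summable complex families indexed by `ℕ × ℤ`. -/
noncomputable abbrev l2NZ : Type := lp (fun _ : ℕ × ℤ => ℂ) 2

/-- The standard orthonormal basis vectors `e_{n,k}` of `ℓ²(ℕ×ℤ)`. -/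
noncomputable def eNZ (n : ℕ) (k : ℤ) : l2NZ := lp.single 2 (n, k) (1 : ℂ)

/-- The Hilbert space direct sum `ℓ²(ℕ×ℤ) ⊕ ℓ²(ℕ×ℤ)`. -/
noncomputable abbrev H2 : Type := WithLp 2 (l2NZ × l2NZ)

/-- The element of `ℓ²(ℕ×ℤ) ⊕ ℓ²(ℕ×ℤ)` with components `x` and `y`. -/
noncomputable def pairH2 (x y : l2NZ) : H2 := (WithLp.equiv 2 (l2NZ × l2NZ)).symm (x, y)

/-- The defining property of the operators `α₀, γ₀` on `ℓ²(ℕ×ℤ)`: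
`α₀ e_{n,k} = e_{n−1,k−1}` for `n ≥ 1`, `α₀ e_{0,k} = 0`, `γ₀ e_{0,k} = e_{0,k−1}`,
and `γ₀ e_{n,k} = 0` for `n ≥ 1`. -/
def IsAlphaGammaZero (α₀ γ₀ : l2NZ →L[ℂ] l2NZ) : Prop :=
  (∀ (n : ℕ) (k : ℤ), α₀ (eNZ (n + 1) k) = eNZ n (k - 1)) ∧
  (∀ k : ℤ, α₀ (eNZ 0 k) = 0) ∧
  (∀ k : ℤ, γ₀ (eNZ 0 k) = eNZ 0 (k - 1)) ∧
  (∀ (n : ℕ) (k : ℤ), γ₀ (eNZ (n + 1) k) = 0)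

/-!
The operators `α₀, γ₀` satisfy the defining relations of `C(SU_q(2))` at `q = 0`, which is checked
on basis vectors. For any pair `(a, g)` of Hilbert space operators satisfying these relations and
any `s, c : ℝ` with `s² + c² = 1`, multiplying out the 2×2 blocks shows that
`[[s a, -c], [g + c a*a, s a*]]` is unitary; it depends continuously on `(s, c)`, and `V_t` is the
case `s = √(1 - t)`, `c = √t`.
-/

open ContinuousLinearMap

section lp

variable {ι 𝕜 : Type*} [RCLike 𝕜] [DecidableEq ι]

theorem lp.ext_continuousLinearMap_single {p : ENNReal} [Fact (1 ≤ p)] (hp : p ≠ ⊤) {F : Type*}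
    [AddCommMonoid F] [Module 𝕜 F] [TopologicalSpace F] [T2Space F]
    {f g : lp (fun _ : ι => 𝕜) p →L[𝕜] F}
    (h : ∀ i, f (lp.single p i 1) = g (lp.single p i 1)) : f = g :=
  lp.ext_continuousLinearMap hp fun i => ext_ring (h i)

theorem lp.adjoint_apply_apply {F : Type*} [NormedAddCommGroup F] [InnerProductSpace 𝕜 F]
    [CompleteSpace F] (T : lp (fun _ : ι => 𝕜) 2 →L[𝕜] F) (v : F) (i : ι) :
    (adjoint T v : lp (fun _ : ι => 𝕜) 2) i = inner 𝕜 (T (lp.single 2 i 1)) v := by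
  rw [← adjoint_inner_right, lp.inner_single_left, RCLike.inner_apply, map_one, mul_one]

end lp

section BlockOperator

variable {𝕜 E : Type*} [RCLike 𝕜] [NormedAddCommGroup E] [InnerProductSpace 𝕜 E]

noncomputable def blockOp (a b c d : E →L[𝕜] E) : WithLp 2 (E × E) →L[𝕜] WithLp 2 (E × E) :=
  ((WithLp.prodContinuousLinearEquiv 2 𝕜 E E).symm : E × E →L[𝕜] WithLp 2 (E × E)) ∘L
    ((a.coprod b).prod (c.coprod d)) ∘L
    ((WithLp.prodContinuousLinearEquiv 2 𝕜 E E) : WithLp 2 (E × E) →L[𝕜] E × E)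

@[simp]
theorem blockOp_apply (a b c d : E →L[𝕜] E) (x y : E) :
    blockOp a b c d (WithLp.toLp 2 (x, y)) = WithLp.toLp 2 (a x + b y, c x + d y) := rfl

theorem blockOp_ext {S T : WithLp 2 (E × E) →L[𝕜] WithLp 2 (E × E)}
    (h : ∀ x y : E, S (WithLp.toLp 2 (x, y)) = T (WithLp.toLp 2 (x, y))) : S = T := by
  ext ⟨x, y⟩
  exact h x y

theorem blockOp_one : blockOp (1 : E →L[𝕜] E) 0 0 1 = 1 :=
  blockOp_ext fun x y => by simp

theorem blockOp_mul (a b c d a' b' c' d' : E →L[𝕜] E) :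
    blockOp a b c d * blockOp a' b' c' d' =
      blockOp (a * a' + b * c') (a * b' + b * d') (c * a' + d * c') (c * b' + d * d') :=
  blockOp_ext fun x y => by
    simp only [mul_apply_eq_comp, blockOp_apply, add_apply, map_add, WithLp.toLp.injEq,
      Prod.mk.injEq]
    constructor <;> abel

theorem Continuous.blockOp {X : Type*} [TopologicalSpace X] {a b c d : X → E →L[𝕜] E}
    (ha : Continuous a) (hb : Continuous b) (hc : Continuous c) (hd : Continuous d) :
    Continuous fun t => blockOp (a t) (b t) (c t) (d t) := by
  have hprod : Continuous fun t => ((a t).coprod (b t)).prod ((c t).coprod (d t)) :=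
    (prodₗᵢ 𝕜).continuous.comp
      ((ha.continuousLinearMapCoprod hb).prodMk (hc.continuousLinearMapCoprod hd))
  exact continuous_const.clm_comp (hprod.clm_comp continuous_const)

theorem adjoint_blockOp [CompleteSpace E] (a b c d : E →L[𝕜] E) :
    adjoint (blockOp a b c d) = blockOp (adjoint a) (adjoint c) (adjoint b) (adjoint d) := by
  refine ((eq_adjoint_iff _ _).2 ?_).symm
  rintro ⟨x, y⟩ ⟨u, v⟩
  simp only [blockOp_apply, WithLp.prod_inner_apply, inner_add_left, inner_add_right,
    adjoint_inner_left]
  abel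

end BlockOperator

/-- The relations between the generators `a = α`, `g = γ` of `C(SU_q(2))` at `q = 0`. -/
structure IsSUZeroPair {R : Type*} [Mul R] [Add R] [One R] [Zero R] [Star R] (a g : R) : Prop where
  star_mul_self_add_star_mul_self : star a * a + star g * g = 1
  mul_star_self : a * star a = 1
  isStarNormal : IsStarNormal g
  mul_eq_zero : a * g = 0
  mul_star_eq_zero : a * star g = 0

namespace IsSUZeroPair

variable {R : Type*} [Ring R] [StarRing R] {a g : R} (h : IsSUZeroPair a g)
include h

theorem mul_star_self_add_star_mul_self : g * star g + star a * a = 1 := by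
  rw [← h.isStarNormal.star_comm_self.eq, add_comm, h.star_mul_self_add_star_mul_self]

theorem star_mul_star_eq_zero : star g * star a = 0 := by
  rw [← star_mul, h.mul_eq_zero, star_zero]

theorem mul_star_eq_zero_rev : g * star a = 0 := by
  rw [← star_star g, ← star_mul, h.mul_star_eq_zero, star_zero]

end IsSUZeroPair

section DeformedBlockOp

variable {𝕜 E : Type*} [RCLike 𝕜] [NormedAddCommGroup E] [InnerProductSpace 𝕜 E] [CompleteSpace E]

noncomputable def deformedBlockOp (a g : E →L[𝕜] E) (s c : ℝ) :
    WithLp 2 (E × E) →L[𝕜] WithLp 2 (E × E) :=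
  blockOp ((s : 𝕜) • a) (-((c : 𝕜) • 1)) (g + (c : 𝕜) • (adjoint a * a)) ((s : 𝕜) • adjoint a)

theorem IsSUZeroPair.deformedBlockOp_mem_unitary {a g : E →L[𝕜] E} (h : IsSUZeroPair a g)
    {s c : ℝ} (hsc : s ^ 2 + c ^ 2 = 1) :
    deformedBlockOp a g s c ∈ unitary (WithLp 2 (E × E) →L[𝕜] WithLp 2 (E × E)) := by
  have mul_star_mul : ∀ x, a * (star a * x) = x := fun x => by
    rw [← mul_assoc, h.mul_star_self, one_mul]
  have star_mul_star_mul : ∀ x, star g * (star a * x) = 0 := fun x => by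
    rw [← mul_assoc, h.star_mul_star_eq_zero, zero_mul]
  have mul_star_mul_rev : ∀ x, g * (star a * x) = 0 := fun x => by
    rw [← mul_assoc, h.mul_star_eq_zero_rev, zero_mul]
  have hsc' : (s : 𝕜) * s + c * c = 1 := by norm_cast; linear_combination hsc
  rw [deformedBlockOp, Unitary.mem_iff, star_eq_adjoint, adjoint_blockOp, blockOp_mul,
    blockOp_mul, ← blockOp_one]
  simp only [← star_eq_adjoint, star_add, star_smul, star_neg, star_mul, star_star, star_one,
    RCLike.star_def, RCLike.conj_ofReal, mul_add, add_mul, smul_mul_assoc, mul_smul_comm,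
    smul_smul, mul_assoc, mul_neg, neg_mul, mul_one, one_mul, mul_star_mul, star_mul_star_mul,
    mul_star_mul_rev, h.mul_eq_zero, h.mul_star_eq_zero, h.mul_star_self,
    h.star_mul_star_eq_zero, h.mul_star_eq_zero_rev, mul_zero, smul_zero, add_zero, zero_add]
  constructor <;> congr 1
  · linear_combination (norm := module)
      hsc' • (star a * a) + h.star_mul_self_add_star_mul_self
  · module
  · module
  · linear_combination (norm := module) hsc' • (1 : E →L[𝕜] E)
  · linear_combination (norm := module) hsc' • (1 : E →L[𝕜] E)
  · module
  · module
  · linear_combination (norm := module)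
      hsc' • (star a * a) + h.mul_star_self_add_star_mul_self

theorem Continuous.deformedBlockOp {X : Type*} [TopologicalSpace X] (a g : E →L[𝕜] E)
    {s c : X → ℝ} (hs : Continuous s) (hc : Continuous c) :
    Continuous fun x => _root_.deformedBlockOp a g (s x) (c x) :=
  Continuous.blockOp (by fun_prop) (by fun_prop) (by fun_prop) (by fun_prop)

end DeformedBlockOp

namespace l2NZ

theorem continuousLinearMap_ext {S T : l2NZ →L[ℂ] l2NZ}
    (h : ∀ n k, S (eNZ n k) = T (eNZ n k)) : S = T :=
  lp.ext_continuousLinearMap_single ENNReal.ofNat_ne_top fun i => h i.1 i.2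

theorem eNZ_apply (n : ℕ) (k : ℤ) (m : ℕ) (j : ℤ) :
    (eNZ n k : ℕ × ℤ → ℂ) (m, j) = if m = n ∧ j = k then 1 else 0 := by
  simp [eNZ, lp.single_apply, Pi.single_apply]

theorem inner_eNZ_left (n : ℕ) (k : ℤ) (v : l2NZ) : inner ℂ (eNZ n k) v = v (n, k) := by
  rw [eNZ, lp.inner_single_left, RCLike.inner_apply, map_one, mul_one]

theorem adjoint_apply_apply (T : l2NZ →L[ℂ] l2NZ) (v : l2NZ) (n : ℕ) (k : ℤ) :
    (adjoint T v : ℕ × ℤ → ℂ) (n, k) = inner ℂ (T (eNZ n k)) v :=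
  lp.adjoint_apply_apply T v (n, k)

end l2NZ

namespace IsAlphaGammaZero

variable {α₀ γ₀ : l2NZ →L[ℂ] l2NZ} (h : IsAlphaGammaZero α₀ γ₀)
include h

theorem adjoint_alpha_eNZ (n : ℕ) (k : ℤ) : adjoint α₀ (eNZ n k) = eNZ (n + 1) (k + 1) := by
  obtain ⟨hα, hα₀, -, -⟩ := h
  ext ⟨m, j⟩
  rw [l2NZ.adjoint_apply_apply, l2NZ.eNZ_apply]
  rcases m with _ | m
  · rw [hα₀, inner_zero_left, if_neg (by omega)]
  · rw [hα, l2NZ.inner_eNZ_left, l2NZ.eNZ_apply]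
    exact if_congr (by omega) rfl rfl

theorem adjoint_gamma_eNZ_zero (k : ℤ) : adjoint γ₀ (eNZ 0 k) = eNZ 0 (k + 1) := by
  obtain ⟨-, -, hγ₀, hγ⟩ := h
  ext ⟨m, j⟩
  rw [l2NZ.adjoint_apply_apply, l2NZ.eNZ_apply]
  rcases m with _ | m
  · rw [hγ₀, l2NZ.inner_eNZ_left, l2NZ.eNZ_apply]
    exact if_congr (by omega) rfl rfl
  · rw [hγ, inner_zero_left, if_neg (by omega)]

theorem adjoint_gamma_eNZ_succ (n : ℕ) (k : ℤ) : adjoint γ₀ (eNZ (n + 1) k) = 0 := by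
  obtain ⟨-, -, hγ₀, hγ⟩ := h
  ext ⟨m, j⟩
  rw [l2NZ.adjoint_apply_apply]
  rcases m with _ | m
  · rw [hγ₀, l2NZ.inner_eNZ_left, l2NZ.eNZ_apply, if_neg (by omega)]
    rfl
  · rw [hγ, inner_zero_left]
    rfl

theorem isSUZeroPair : IsSUZeroPair α₀ γ₀ := by
  have hα' := h.adjoint_alpha_eNZ
  have hγ₀' := h.adjoint_gamma_eNZ_zero
  have hγ' := h.adjoint_gamma_eNZ_succ
  obtain ⟨hα, hα₀, hγ₀, hγ⟩ := h
  refine ⟨?_, ?_, ⟨?_⟩, ?_, ?_⟩ <;> refine l2NZ.continuousLinearMap_ext fun n k => ?_ <;>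
    rcases n with _ | n <;>
    simp [star_eq_adjoint, hα, hα₀, hγ₀, hγ, hα', hγ₀', hγ']

end IsAlphaGammaZero

open ContinuousLinearMap in
/-- **Statement 11.** For every `t ∈ [0,1]`, the 2×2 operator matrix
`V_t = [[√(1−t)·α₀, −√t·1], [γ₀ + √t·α₀*α₀, √(1−t)·α₀*]]` is a unitary operator on
`ℓ²(ℕ×ℤ) ⊕ ℓ²(ℕ×ℤ)`; the map `t ↦ V_t` is norm-continuous on `[0,1]`; and
`V₀ = [[α₀, 0], [γ₀, α₀*]]`. -/
theorem Vt_unitary_continuous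
    (α₀ γ₀ : l2NZ →L[ℂ] l2NZ) (h : IsAlphaGammaZero α₀ γ₀)
    (V : ℝ → (H2 →L[ℂ] H2))
    (hV : ∀ t ∈ Set.Icc (0 : ℝ) 1, ∀ x y : l2NZ,
      V t (pairH2 x y) =
        pairH2 ((Real.sqrt (1 - t) : ℂ) • α₀ x - (Real.sqrt t : ℂ) • y)
          (γ₀ x + (Real.sqrt t : ℂ) • adjoint α₀ (α₀ x)
            + (Real.sqrt (1 - t) : ℂ) • adjoint α₀ y)) :
    (∀ t ∈ Set.Icc (0 : ℝ) 1,
      adjoint (V t) * V t = 1 ∧ V t * adjoint (V t) = 1) ∧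
    ContinuousOn V (Set.Icc (0 : ℝ) 1) ∧
    (∀ x y : l2NZ, V 0 (pairH2 x y) = pairH2 (α₀ x) (γ₀ x + adjoint α₀ y)) := by
  have hVt : Set.EqOn V (fun t => deformedBlockOp α₀ γ₀ √(1 - t) √t) (Set.Icc 0 1) :=
    fun t ht => blockOp_ext fun x y => by
      rw [← WithLp.equiv_symm_apply, ← pairH2, hV t ht]
      simp only [deformedBlockOp, blockOp_apply, pairH2, WithLp.equiv_symm_apply, add_apply,
        smul_apply, neg_apply, one_apply_eq_self, mul_apply_eq_comp, sub_eq_add_neg]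
      rfl
  refine ⟨fun t ht => ?_, ?_, fun x y => ?_⟩
  · rw [hVt ht]
    exact h.isSUZeroPair.deformedBlockOp_mem_unitary
      (by rw [Real.sq_sqrt (by linarith [ht.2]), Real.sq_sqrt ht.1]; ring)
  · exact (Continuous.deformedBlockOp α₀ γ₀ (by fun_prop) (by fun_prop)).continuousOn.congr hVt
  · simpa using hV 0 (by norm_num) x y
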